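/- Let T be a tree on a finite, nonempty, linearly ordered vertex type V, let m ≥ 1 be an integer, and let S be the m-order subdivision of T. Then for all vertices u, v of T, the distance in S between the original vertices satisfies dist_S(inl u, inl v) = (m+1)·dist_T(u,v). -/

import Mathlib

/-!
A shortest path of `T` lifts to a walk of `mSubdivision T m` that is `m + 1` times as long,
since every edge of `T` becomes a path of length `m + 1`. Conversely, the potential
`(m + 1) * T.dist u ·` changes by at most `m + 1` along edges of `T`; interpolating it linearly
along each subdivided edge gives a function on `mSubdivision T m` that changes by at most `1`
along its edges, so no walk from `inl u` to `inl v` is shorter than `(m + 1) * T.dist u v`.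
-/

/-- The `m`-order subdivision of a graph `T` on a linearly ordered vertex type:
every edge of `T` is replaced by a path of length `m + 1` through `m` new vertices. -/
def mSubdivision {V : Type*} [LinearOrder V] (T : SimpleGraph V) (m : ℕ) :
    SimpleGraph (V ⊕ (T.edgeSet × Fin m)) :=
  SimpleGraph.fromRel (fun x y =>
    match x, y with
    | Sum.inl u, Sum.inr (e, i) =>
        (i.val = 0 ∧ u = Sym2.inf e.1) ∨ (i.val = m - 1 ∧ u = Sym2.sup e.1)
    | Sum.inr (e, i), Sum.inr (e', j) => e = e' ∧ i.val + 1 = j.val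
    | _, _ => False)

namespace SimpleGraph

variable {α : Type*} {G : SimpleGraph α} {f : α → ℕ} {x y : α}

theorem Walk.apply_le_apply_add_length (hf : ∀ ⦃a b⦄, G.Adj a b → f b ≤ f a + 1)
    (p : G.Walk x y) : f y ≤ f x + p.length := by
  induction p with
  | nil => simp
  | cons h _ ih => rw [Walk.length_cons]; linarith [hf h]

theorem Reachable.apply_le_apply_add_dist (hr : G.Reachable x y)
    (hf : ∀ ⦃a b⦄, G.Adj a b → f b ≤ f a + 1) : f y ≤ f x + G.dist x y := by
  obtain ⟨p, hp⟩ := hr.exists_walk_length_eq_dist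
  exact hp ▸ p.apply_le_apply_add_length hf

theorem Adj.dist_le_dist_add_one {z : α} (h : G.Adj y z) (x : α) :
    G.dist x z ≤ G.dist x y + 1 := by
  rcases h.diff_dist_adj (u := x) with h | h | h <;> omega

theorem adj_inf_sup {V : Type*} [LinearOrder V] {T : SimpleGraph V} (e : T.edgeSet) :
    T.Adj e.1.inf e.1.sup := by
  rw [← mem_edgeSet]
  convert e.2
  exact Sym2.sortEquiv.symm_apply_apply e.1

end SimpleGraph

section mSubdivision

open SimpleGraph

variable {V : Type*} [LinearOrder V] {T : SimpleGraph V} {m : ℕ}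

@[simp] lemma mSubdivision_not_adj_inl_inl (a b : V) :
    ¬(mSubdivision T m).Adj (.inl a) (.inl b) := by
  simp [mSubdivision]

lemma mSubdivision_adj_inl_inr {w : V} {e : T.edgeSet} {i : Fin m} :
    (mSubdivision T m).Adj (.inl w) (.inr (e, i)) ↔
      (i.val = 0 ∧ w = e.1.inf) ∨ (i.val = m - 1 ∧ w = e.1.sup) := by
  simp [mSubdivision]

lemma mSubdivision_adj_inr_inr {e e' : T.edgeSet} {i j : Fin m} :
    (mSubdivision T m).Adj (.inr (e, i)) (.inr (e', j)) ↔
      e = e' ∧ (i.val + 1 = j.val ∨ j.val + 1 = i.val) := by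
  simp only [mSubdivision, fromRel_adj, ne_eq, Sum.inr.injEq, Prod.mk.injEq, Fin.ext_iff]
  grind

lemma exists_walk_inl_inf_inr (e : T.edgeSet) :
    ∀ i (hi : i < m), ∃ w : (mSubdivision T m).Walk (.inl e.1.inf) (.inr (e, ⟨i, hi⟩)),
      w.length = i + 1
  | 0, hi => ⟨.cons (mSubdivision_adj_inl_inr.2 (.inl ⟨rfl, rfl⟩)) .nil, rfl⟩
  | i + 1, hi => by
    obtain ⟨w, hw⟩ := exists_walk_inl_inf_inr e i (by omega)
    exact ⟨w.concat (mSubdivision_adj_inr_inr.2 ⟨rfl, .inl rfl⟩), by simp [hw]⟩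

lemma exists_walk_inl_inf_inl_sup (hm : 1 ≤ m) (e : T.edgeSet) :
    ∃ w : (mSubdivision T m).Walk (.inl e.1.inf) (.inl e.1.sup), w.length = m + 1 := by
  obtain ⟨w, hw⟩ := exists_walk_inl_inf_inr (m := m) e (m - 1) (by omega)
  have hlast : (mSubdivision T m).Adj (.inr (e, ⟨m - 1, by omega⟩)) (.inl e.1.sup) :=
    (mSubdivision_adj_inl_inr.2 (.inr ⟨rfl, rfl⟩)).symm
  exact ⟨w.concat hlast, by simp [hw]; omega⟩

lemma exists_walk_inl_of_adj (hm : 1 ≤ m) {a b : V} (hab : T.Adj a b) :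
    ∃ w : (mSubdivision T m).Walk (.inl a) (.inl b), w.length = m + 1 := by
  wlog h : a ≤ b generalizing a b
  · obtain ⟨w, hw⟩ := this hab.symm (le_of_not_ge h)
    exact ⟨w.reverse, by simpa⟩
  obtain ⟨w, hw⟩ := exists_walk_inl_inf_inl_sup hm ⟨s(a, b), hab⟩
  exact ⟨w.copy (by simp [h]) (by simp [h]), by rw [Walk.length_copy, hw]⟩

lemma exists_walk_inl_of_walk (hm : 1 ≤ m) {a b : V} :
    ∀ p : T.Walk a b, ∃ w : (mSubdivision T m).Walk (.inl a) (.inl b),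
      w.length = (m + 1) * p.length
  | .nil => ⟨.nil, rfl⟩
  | .cons hab p => by
    obtain ⟨w₁, hw₁⟩ := exists_walk_inl_of_adj hm hab
    obtain ⟨w₂, hw₂⟩ := exists_walk_inl_of_walk hm p
    exact ⟨w₁.append w₂, by simp [hw₁, hw₂]; ring⟩

/-- The vertex `(e, i)` lies at distance `i + 1` from `e.inf` and `m - i` from `e.sup`. -/
def subdivisionExtension (f : V → ℕ) : V ⊕ (T.edgeSet × Fin m) → ℕ
  | .inl w => f w
  | .inr (e, i) => min (f e.1.inf + (i + 1)) (f e.1.sup + (m - i))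

lemma subdivisionExtension_le_add_one {f : V → ℕ}
    (hf : ∀ ⦃a b⦄, T.Adj a b → f b ≤ f a + (m + 1)) ⦃x y : V ⊕ (T.edgeSet × Fin m)⦄
    (hxy : (mSubdivision T m).Adj x y) :
    subdivisionExtension f y ≤ subdivisionExtension f x + 1 := by
  have hedge (e : T.edgeSet) :
      f e.1.sup ≤ f e.1.inf + (m + 1) ∧ f e.1.inf ≤ f e.1.sup + (m + 1) :=
    ⟨hf (adj_inf_sup e), hf (adj_inf_sup e).symm⟩
  rcases x with a | ⟨e, i⟩ <;> rcases y with b | ⟨e', j⟩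
  · simp at hxy
  · have := hedge e'
    rcases mSubdivision_adj_inl_inr.1 hxy with ⟨_, rfl⟩ | ⟨_, rfl⟩ <;>
      simp only [subdivisionExtension] <;> omega
  · have := hedge e
    rcases mSubdivision_adj_inl_inr.1 hxy.symm with ⟨_, rfl⟩ | ⟨_, rfl⟩ <;>
      simp only [subdivisionExtension] <;> omega
  · obtain ⟨rfl, _⟩ := mSubdivision_adj_inr_inr.1 hxy
    simp only [subdivisionExtension]
    omega

lemma mSubdivision_dist_inl (hm : 1 ≤ m) {u v : V} (hr : T.Reachable u v) :
    (mSubdivision T m).dist (.inl u) (.inl v) = (m + 1) * T.dist u v := by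
  obtain ⟨p, hp⟩ := hr.exists_walk_length_eq_dist
  obtain ⟨w, hw⟩ := exists_walk_inl_of_walk hm p
  apply le_antisymm
  · exact hp ▸ hw ▸ dist_le w
  · have hf : ∀ ⦃a b⦄, T.Adj a b → (m + 1) * T.dist u b ≤ (m + 1) * T.dist u a + (m + 1) :=
      fun a b hab => by nlinarith [hab.dist_le_dist_add_one u]
    simpa [subdivisionExtension] using
      Reachable.apply_le_apply_add_dist ⟨w⟩ (subdivisionExtension_le_add_one hf)

end mSubdivision

theorem dist_mSubdivision_general {V : Type*} [LinearOrder V]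
    (T : SimpleGraph V) (hT : T.IsTree) (m : ℕ) (hm : 1 ≤ m) (u v : V) :
    (mSubdivision T m).dist (Sum.inl u) (Sum.inl v) = (m + 1) * T.dist u v :=
  mSubdivision_dist_inl hm (hT.connected.preconnected u v)

theorem dist_mSubdivision {V : Type*} [Fintype V] [LinearOrder V] [Nonempty V]
    (T : SimpleGraph V) (hT : T.IsTree) (m : ℕ) (hm : 1 ≤ m) (u v : V) :
    (mSubdivision T m).dist (Sum.inl u) (Sum.inl v) = (m + 1) * T.dist u v :=
  dist_mSubdivision_general T hT m hm u v
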